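/- arXiv:1408.0994 — 10 statements merged into one kernel-verified Lean document; each statement's English description precedes it below -/
import Mathlib

section
/- Suppose the invertible blocked matrix P admits a decomposition (3) with factors L, C₄, C₃, C₁, R. Then: (i) rank C₃ = r₃; (ii) rank L + r₁ ≥ n; (iii) rank R + r₄ ≥ m; (iv) rank R + rank L ≥ r₂. In particular, rank R + rank L ≥ max(r₂, n + m − r₁ − r₄). -/
/-!
Multiplying out the decomposition gives `P₃ = C₃`, `P₄ = C₄ + C₃ R`, `P₁ = C₁ + L C₃` and
`P₂ = L C₄ + P₁ R`. Since `P` is invertible, so is the block upper triangular middle factor, hence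
`C₄` and `C₁` are invertible and have full rank. All bounds then follow from subadditivity of rank
and `rank (A * B) ≤ min (rank A) (rank B)`.
-/

namespace Matrix

section Rank

variable {l m n o K : Type*} [Fintype l] [Fintype n] [Fintype o] [Field K]

theorem rank_add_le (A B : Matrix m n K) : (A + B).rank ≤ A.rank + B.rank := by
  unfold rank
  rw [mulVecLin_add]
  exact (Submodule.finrank_mono (LinearMap.range_add_le _ _)).trans
    (Submodule.finrank_add_le_finrank_add_finrank _ _)

theorem rank_mul_add_mul_le (A : Matrix m l K) (B : Matrix l n K) (C : Matrix m o K)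
    (D : Matrix o n K) : (A * B + C * D).rank ≤ A.rank + D.rank :=
  (rank_add_le _ _).trans (add_le_add (rank_mul_le_left _ _) (rank_mul_le_right _ _))

theorem rank_le_rank_add_mul_add_rank_left (C : Matrix m n K) (A : Matrix m l K)
    (B : Matrix l n K) : C.rank ≤ (C + A * B).rank + A.rank :=
  calc C.rank = ((C + A * B) + A * (-B)).rank := by rw [Matrix.mul_neg, add_neg_cancel_right]
    _ ≤ (C + A * B).rank + (A * (-B)).rank := rank_add_le _ _
    _ ≤ (C + A * B).rank + A.rank := by gcongr; exact rank_mul_le_left _ _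

theorem rank_le_rank_add_mul_add_rank_right (C : Matrix m n K) (A : Matrix m l K)
    (B : Matrix l n K) : C.rank ≤ (C + A * B).rank + B.rank :=
  calc C.rank = ((C + A * B) + (-A) * B).rank := by rw [Matrix.neg_mul, add_neg_cancel_right]
    _ ≤ (C + A * B).rank + ((-A) * B).rank := rank_add_le _ _
    _ ≤ (C + A * B).rank + B.rank := by gcongr; exact rank_mul_le_right _ _

end Rank

theorem fromBlocks_one_zero_mul_fromBlocks_zero₂₁_mul_fromBlocks_one_zero
    {m n α : Type*} [Fintype m] [Fintype n] [DecidableEq m] [DecidableEq n] [Ring α]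
    (L R : Matrix n m α) (A : Matrix m m α) (B : Matrix m n α) (D : Matrix n n α) :
    fromBlocks 1 0 L 1 * fromBlocks A B 0 D * fromBlocks 1 0 R 1 =
      fromBlocks (A + B * R) B (L * A + (D + L * B) * R) (D + L * B) := by
  simp only [fromBlocks_multiply, Matrix.one_mul, Matrix.zero_mul, Matrix.mul_zero, Matrix.mul_one,
    add_zero, zero_add]
  rw [add_comm D]

end Matrix

open Matrix

/-- Theorem 1 (lower bounds): if the invertible blocked matrix `P` admits a
decomposition (3) with factors `L, C₄, C₃, C₁, R`, then
(i) `rank C₃ = r₃`, (ii) `rank L + r₁ ≥ n`, (iii) `rank R + r₄ ≥ m`,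
(iv) `rank R + rank L ≥ r₂`, and in particular
`rank R + rank L ≥ max (r₂, n + m - r₁ - r₄)`. -/
theorem stmt_0 {K : Type*} [Field K] {m n : ℕ}
    (P₄ : Matrix (Fin m) (Fin m) K) (P₃ : Matrix (Fin m) (Fin n) K)
    (P₂ : Matrix (Fin n) (Fin m) K) (P₁ : Matrix (Fin n) (Fin n) K)
    (hP : IsUnit (Matrix.fromBlocks P₄ P₃ P₂ P₁))
    (L R : Matrix (Fin n) (Fin m) K)
    (C₄ : Matrix (Fin m) (Fin m) K) (C₃ : Matrix (Fin m) (Fin n) K)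
    (C₁ : Matrix (Fin n) (Fin n) K)
    (hdec : Matrix.fromBlocks P₄ P₃ P₂ P₁ =
      Matrix.fromBlocks 1 0 L 1 * Matrix.fromBlocks C₄ C₃ 0 C₁ *
        Matrix.fromBlocks 1 0 R 1) :
    C₃.rank = P₃.rank ∧
    L.rank + P₁.rank ≥ n ∧
    R.rank + P₄.rank ≥ m ∧
    R.rank + L.rank ≥ P₂.rank ∧
    R.rank + L.rank ≥ max P₂.rank (n + m - P₁.rank - P₄.rank) := by
  rw [hdec] at hP
  have hC : IsUnit C₄ ∧ IsUnit C₁ :=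
    isUnit_fromBlocks_zero₂₁.1 (isUnit_of_mul_isUnit_right (isUnit_of_mul_isUnit_left hP))
  rw [fromBlocks_one_zero_mul_fromBlocks_zero₂₁_mul_fromBlocks_one_zero] at hdec
  obtain ⟨h₄, h₃, h₂, h₁⟩ := fromBlocks_inj.1 hdec
  rw [← h₁] at h₂
  have hii : L.rank + P₁.rank ≥ n := by
    simpa [h₁, rank_of_isUnit C₁ hC.2, add_comm] using rank_le_rank_add_mul_add_rank_left C₁ L C₃
  have hiii : R.rank + P₄.rank ≥ m := by
    simpa [h₄, rank_of_isUnit C₄ hC.1, add_comm] using rank_le_rank_add_mul_add_rank_right C₄ C₃ R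
  have hiv : R.rank + L.rank ≥ P₂.rank :=
    h₂ ▸ (rank_mul_add_mul_le L C₄ P₁ R).trans_eq (add_comm _ _)
  exact ⟨by rw [h₃], hii, hiii, hiv, max_le hiv (by omega)⟩
end

section
/- For the blocks of the invertible matrix P one has P₂(ker P₄) ∩ P₁(ker P₃) = {0} (as subspaces of Kⁿ) and P₄(ker P₂) ∩ P₃(ker P₁) = {0} (as subspaces of Kᵐ). -/
/-!
If `x = P₂ u = P₁ v` with `P₄ u = 0 = P₃ v`, then the block matrix sends `(u, -v)` to `0`,
so `u = 0` by invertibility and hence `x = 0`. The second identity is the first one for the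
block matrix with both block rows and block columns swapped, which is again invertible.
-/

namespace Matrix

variable {m n : Type*} [Fintype m] [Fintype n] [DecidableEq m] [DecidableEq n]

theorem isUnit_fromBlocks_swap {R : Type*} [CommRing R] {A : Matrix m m R} {B : Matrix m n R}
    {C : Matrix n m R} {D : Matrix n n R} (h : IsUnit (fromBlocks A B C D)) :
    IsUnit (fromBlocks D C B A) := by
  rw [← fromBlocks_submatrix_sum_swap_sum_swap]
  exact (isUnit_submatrix_equiv (Equiv.sumComm _ _) (Equiv.sumComm _ _)).2 h

theorem map_ker_inf_map_ker_eq_bot_of_isUnit_fromBlocks {K : Type*} [Field K]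
    (A : Matrix m m K) (B : Matrix m n K) (C : Matrix n m K) (D : Matrix n n K)
    (h : IsUnit (fromBlocks A B C D)) :
    (LinearMap.ker A.mulVecLin).map C.mulVecLin ⊓
      (LinearMap.ker B.mulVecLin).map D.mulVecLin = ⊥ := by
  rw [eq_bot_iff]
  rintro x ⟨⟨u, hu, rfl⟩, ⟨v, hv, hvx⟩⟩
  simp only [SetLike.mem_coe, LinearMap.mem_ker, mulVecLin_apply] at hu hv hvx
  have hkernel : fromBlocks A B C D *ᵥ Sum.elim u (-v) = fromBlocks A B C D *ᵥ 0 := by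
    simp [fromBlocks_mulVec, mulVec_neg, hu, hv, hvx]
  have hu0 : u = 0 := by
    funext i
    exact congrFun (mulVec_injective_iff_isUnit.2 h hkernel) (Sum.inl i)
  simp [hu0]

end Matrix

/-- For the blocks of an invertible matrix `P`,
`P₂(ker P₄) ∩ P₁(ker P₃) = {0}` (in `Kⁿ`) and
`P₄(ker P₂) ∩ P₃(ker P₁) = {0}` (in `Kᵐ`). -/
theorem stmt_6 {K : Type*} [Field K] {m n : ℕ}
    (P₄ : Matrix (Fin m) (Fin m) K) (P₃ : Matrix (Fin m) (Fin n) K)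
    (P₂ : Matrix (Fin n) (Fin m) K) (P₁ : Matrix (Fin n) (Fin n) K)
    (hP : IsUnit (Matrix.fromBlocks P₄ P₃ P₂ P₁)) :
    (LinearMap.ker P₄.mulVecLin).map P₂.mulVecLin ⊓
      (LinearMap.ker P₃.mulVecLin).map P₁.mulVecLin = ⊥ ∧
    (LinearMap.ker P₂.mulVecLin).map P₄.mulVecLin ⊓
      (LinearMap.ker P₁.mulVecLin).map P₃.mulVecLin = ⊥ := by
  refine ⟨Matrix.map_ker_inf_map_ker_eq_bot_of_isUnit_fromBlocks _ _ _ _ hP, ?_⟩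
  rw [inf_comm]
  exact Matrix.map_ker_inf_map_ker_eq_bot_of_isUnit_fromBlocks _ _ _ _
    (Matrix.isUnit_fromBlocks_swap hP)
end

section
/- For the blocks of the invertible matrix P: dim P₃(ker P₁) = dim ker P₁, and dim P₃(ker P₁) + r₁ = n; dim P₄(ker P₂) = dim ker P₂, and dim P₄(ker P₂) + r₂ = m; dim P₁(ker P₃) = dim ker P₃, and dim P₁(ker P₃) + r₃ = n; dim P₂(ker P₄) = dim ker P₄, and dim P₂(ker P₄) + r₄ = m. -/
/-!
Since `P` is invertible, no nonzero vector is killed by both blocks of a block column of `P`: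
`ker P₁ ∩ ker P₃ = 0` and `ker P₂ ∩ ker P₄ = 0`. So each block is injective on the kernel of the
other block of its column, which gives the first equality of each pair; the second one is then
rank–nullity.
-/

open Module Matrix LinearMap

theorem Submodule.finrank_map_eq_of_disjoint_ker {R V W : Type*} [Ring R] [AddCommGroup V]
    [Module R V] [AddCommGroup W] [Module R W] {p : Submodule R V} {f : V →ₗ[R] W}
    (h : Disjoint p (ker f)) : finrank R (p.map f) = finrank R p := by
  rw [← range_domRestrict]
  exact (LinearEquiv.ofInjective _ (injective_domRestrict_iff.mpr h)).finrank_eq.symm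

theorem Matrix.finrank_ker_mulVecLin_add_rank {K m n : Type*} [Field K] [Fintype m] [Fintype n]
    (A : Matrix m n K) : finrank K (ker A.mulVecLin) + A.rank = Fintype.card n := by
  rw [Matrix.rank, add_comm, finrank_range_add_finrank_ker, finrank_fintype_fun_eq_card]

section Blocks

variable {R l m : Type*} [CommRing R] [Fintype l] [Fintype m] [DecidableEq l] [DecidableEq m]
  {A : Matrix l l R} {B : Matrix l m R} {C : Matrix m l R} {D : Matrix m m R}

theorem Matrix.disjoint_ker_left_of_isUnit_fromBlocks (hP : IsUnit (fromBlocks A B C D)) :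
    Disjoint (ker A.mulVecLin) (ker C.mulVecLin) := by
  refine Submodule.disjoint_def.mpr fun x hA hC => ?_
  have hx : fromBlocks A B C D *ᵥ Sum.elim x 0 = fromBlocks A B C D *ᵥ 0 := by
    ext (i | i) <;> simp_all [fromBlocks_mulVec]
  simpa using congrArg (· ∘ Sum.inl) (mulVec_injective_of_isUnit hP hx)

theorem Matrix.disjoint_ker_right_of_isUnit_fromBlocks (hP : IsUnit (fromBlocks A B C D)) :
    Disjoint (ker B.mulVecLin) (ker D.mulVecLin) := by
  refine Submodule.disjoint_def.mpr fun x hB hD => ?_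
  have hx : fromBlocks A B C D *ᵥ Sum.elim 0 x = fromBlocks A B C D *ᵥ 0 := by
    ext (i | i) <;> simp_all [fromBlocks_mulVec]
  simpa using congrArg (· ∘ Sum.inr) (mulVec_injective_of_isUnit hP hx)

end Blocks

theorem Matrix.finrank_map_ker_of_disjoint_ker {K l m n : Type*} [Field K] [Fintype l]
    [Fintype m] [Fintype n] {A : Matrix l n K} {B : Matrix m n K}
    (h : Disjoint (ker A.mulVecLin) (ker B.mulVecLin)) :
    finrank K ((ker A.mulVecLin).map B.mulVecLin) = finrank K (ker A.mulVecLin) ∧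
      finrank K ((ker A.mulVecLin).map B.mulVecLin) + A.rank = Fintype.card n := by
  have hmap := Submodule.finrank_map_eq_of_disjoint_ker h
  exact ⟨hmap, hmap ▸ A.finrank_ker_mulVecLin_add_rank⟩

/-- Dimension formulas for images of kernels under the blocks of an invertible `P`:
`dim P₃(ker P₁) = dim ker P₁ = n - r₁`, `dim P₄(ker P₂) = dim ker P₂ = m - r₂`,
`dim P₁(ker P₃) = dim ker P₃ = n - r₃`, `dim P₂(ker P₄) = dim ker P₄ = m - r₄`. -/
theorem stmt_7 {K : Type*} [Field K] {m n : ℕ}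
    (P₄ : Matrix (Fin m) (Fin m) K) (P₃ : Matrix (Fin m) (Fin n) K)
    (P₂ : Matrix (Fin n) (Fin m) K) (P₁ : Matrix (Fin n) (Fin n) K)
    (hP : IsUnit (Matrix.fromBlocks P₄ P₃ P₂ P₁)) :
    (Module.finrank K ((LinearMap.ker P₁.mulVecLin).map P₃.mulVecLin) =
        Module.finrank K (LinearMap.ker P₁.mulVecLin) ∧
      Module.finrank K ((LinearMap.ker P₁.mulVecLin).map P₃.mulVecLin) + P₁.rank = n) ∧
    (Module.finrank K ((LinearMap.ker P₂.mulVecLin).map P₄.mulVecLin) =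
        Module.finrank K (LinearMap.ker P₂.mulVecLin) ∧
      Module.finrank K ((LinearMap.ker P₂.mulVecLin).map P₄.mulVecLin) + P₂.rank = m) ∧
    (Module.finrank K ((LinearMap.ker P₃.mulVecLin).map P₁.mulVecLin) =
        Module.finrank K (LinearMap.ker P₃.mulVecLin) ∧
      Module.finrank K ((LinearMap.ker P₃.mulVecLin).map P₁.mulVecLin) + P₃.rank = n) ∧
    (Module.finrank K ((LinearMap.ker P₄.mulVecLin).map P₂.mulVecLin) =
        Module.finrank K (LinearMap.ker P₄.mulVecLin) ∧
      Module.finrank K ((LinearMap.ker P₄.mulVecLin).map P₂.mulVecLin) + P₄.rank = m) := by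
  have hleft := disjoint_ker_left_of_isUnit_fromBlocks hP
  have hright := disjoint_ker_right_of_isUnit_fromBlocks hP
  refine ⟨?_, ?_, ?_, ?_⟩
  · simpa only [Fintype.card_fin] using finrank_map_ker_of_disjoint_ker hright.symm
  · simpa only [Fintype.card_fin] using finrank_map_ker_of_disjoint_ker hleft.symm
  · simpa only [Fintype.card_fin] using finrank_map_ker_of_disjoint_ker hright
  · simpa only [Fintype.card_fin] using finrank_map_ker_of_disjoint_ker hleft
end

section
/- For the blocks of the invertible matrix P: dim(im P₁ ∩ im P₂) + n = r₁ + r₂ and dim(im P₃ ∩ im P₄) + m = r₃ + r₄. -/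
/-! The bottom block row `[P₂ P₁]` of the invertible matrix `P` is surjective, so
`im P₂ + im P₁ = Kⁿ`, and the claim is Grassmann's formula
`dim (U ∩ W) + dim (U + W) = dim U + dim W`; likewise for the top block row `[P₄ P₃]`. -/

open Matrix

theorem Submodule.finrank_inf_add_finrank_eq_of_sup_eq_top {K V : Type*} [DivisionRing K]
    [AddCommGroup V] [Module K V] [FiniteDimensional K V] {s t : Submodule K V}
    (h : s ⊔ t = ⊤) :
    Module.finrank K ↥(s ⊓ t) + Module.finrank K V = Module.finrank K s + Module.finrank K t := by
  rw [← finrank_sup_add_finrank_inf_eq, h, finrank_top, add_comm]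

namespace Matrix

section Surjective

variable {R m₁ m₂ n : Type*} [Semiring R] [Fintype n] {A₁ : Matrix m₁ n R} {A₂ : Matrix m₂ n R}

theorem mulVec_surjective_of_fromRows_left (h : Function.Surjective (fromRows A₁ A₂).mulVec) :
    Function.Surjective A₁.mulVec := fun y ↦ by
  obtain ⟨v, hv⟩ := h (Sum.elim y 0)
  exact ⟨v, by simpa using congrArg (· ∘ Sum.inl) hv⟩

theorem mulVec_surjective_of_fromRows_right (h : Function.Surjective (fromRows A₁ A₂).mulVec) :
    Function.Surjective A₂.mulVec := fun y ↦ by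
  obtain ⟨v, hv⟩ := h (Sum.elim 0 y)
  exact ⟨v, by simpa using congrArg (· ∘ Sum.inr) hv⟩

end Surjective

variable {R m n₁ n₂ : Type*} [Fintype n₁] [Fintype n₂]

theorem range_mulVecLin_fromCols [CommSemiring R] (A₁ : Matrix m n₁ R) (A₂ : Matrix m n₂ R) :
    LinearMap.range (fromCols A₁ A₂).mulVecLin =
      LinearMap.range A₁.mulVecLin ⊔ LinearMap.range A₂.mulVecLin := by
  ext y
  simp only [LinearMap.mem_range, Submodule.mem_sup, mulVecLin_apply]
  constructor
  · rintro ⟨v, rfl⟩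
    exact ⟨_, ⟨v ∘ Sum.inl, rfl⟩, _, ⟨v ∘ Sum.inr, rfl⟩, (fromCols_mulVec A₁ A₂ v).symm⟩
  · rintro ⟨_, ⟨v₁, rfl⟩, _, ⟨v₂, rfl⟩, rfl⟩
    exact ⟨Sum.elim v₁ v₂, fromCols_mulVec_sumElim A₁ A₂ v₁ v₂⟩

theorem finrank_range_inf_add_card_eq_rank_add_rank [Fintype m] [Field R]
    {A₁ : Matrix m n₁ R} {A₂ : Matrix m n₂ R} (h : Function.Surjective (fromCols A₁ A₂).mulVec) :
    Module.finrank R ↥(LinearMap.range A₁.mulVecLin ⊓ LinearMap.range A₂.mulVecLin) +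
      Fintype.card m = A₁.rank + A₂.rank := by
  have hsup : LinearMap.range (fromCols A₁ A₂).mulVecLin = ⊤ := LinearMap.range_eq_top.mpr h
  rw [range_mulVecLin_fromCols] at hsup
  rw [← Module.finrank_fintype_fun_eq_card (R := R)]
  exact Submodule.finrank_inf_add_finrank_eq_of_sup_eq_top hsup

end Matrix

/-- For the blocks of an invertible matrix `P`:
`dim (im P₁ ∩ im P₂) + n = r₁ + r₂` and `dim (im P₃ ∩ im P₄) + m = r₃ + r₄`. -/
theorem stmt_8 {K : Type*} [Field K] {m n : ℕ}
    (P₄ : Matrix (Fin m) (Fin m) K) (P₃ : Matrix (Fin m) (Fin n) K)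
    (P₂ : Matrix (Fin n) (Fin m) K) (P₁ : Matrix (Fin n) (Fin n) K)
    (hP : IsUnit (Matrix.fromBlocks P₄ P₃ P₂ P₁)) :
    Module.finrank K (LinearMap.range P₁.mulVecLin ⊓ LinearMap.range P₂.mulVecLin : Submodule K (Fin n → K)) + n = P₁.rank + P₂.rank ∧
    Module.finrank K (LinearMap.range P₃.mulVecLin ⊓ LinearMap.range P₄.mulVecLin : Submodule K (Fin m → K)) + m = P₃.rank + P₄.rank := by
  have hsurj := mulVec_surjective_iff_isUnit.mpr hP
  rw [← fromRows_fromCols_eq_fromBlocks] at hsurj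
  have bottom := finrank_range_inf_add_card_eq_rank_add_rank
    (mulVec_surjective_of_fromRows_right hsurj)
  have top := finrank_range_inf_add_card_eq_rank_add_rank
    (mulVec_surjective_of_fromRows_left hsurj)
  rw [inf_comm, add_comm P₂.rank, Fintype.card_fin] at bottom
  rw [inf_comm, add_comm P₄.rank, Fintype.card_fin] at top
  exact ⟨bottom, top⟩
end

section
/- Let C be a finite-dimensional vector space over a field K and let A, B be subspaces of C with dim A ≥ dim B. Then there exists a subspace S of C such that S ∩ A = {0}, S + A = C, and S ∩ B = {0}. -/
/-!
Downward induction on `A`. If `A ≠ ⊤` then also `B ≠ ⊤`, and a vector `v` outside both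
exists since no module is the union of two proper submodules. Adjoining `v` raises both
dimensions by one; a complement `S` of `A + Kv` disjoint from `B + Kv` gives the complement
`S + Kv` of `A`, disjoint from `B`, by modularity of the submodule lattice.
-/

open Module Submodule

theorem Submodule.exists_notMem_notMem_of_ne_top {R M : Type*} [Ring R] [AddCommGroup M]
    [Module R M] {p q : Submodule R M} (hp : p ≠ ⊤) (hq : q ≠ ⊤) : ∃ v, v ∉ p ∧ v ∉ q := by
  obtain ⟨a, -, ha⟩ := SetLike.exists_of_lt hp.lt_top
  obtain ⟨b, -, hb⟩ := SetLike.exists_of_lt hq.lt_top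
  by_cases haq : a ∈ q
  · by_cases hbp : b ∈ p
    · exact ⟨a + b, (p.add_mem_iff_left hbp).not.mpr ha, (q.add_mem_iff_right haq).not.mpr hb⟩
    · exact ⟨b, hbp, hb⟩
  · exact ⟨a, ha, haq⟩

theorem Submodule.exists_isCompl_disjoint_of_finrank_le {K V : Type*} [Field K] [AddCommGroup V]
    [Module K V] [FiniteDimensional K V] (A B : Submodule K V) (h : finrank K B ≤ finrank K A) :
    ∃ S : Submodule K V, IsCompl S A ∧ Disjoint S B := by
  induction A using WellFoundedGT.induction generalizing B with
  | ind A ih =>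
  by_cases hA : A = ⊤
  · exact ⟨⊥, hA ▸ isCompl_bot_top, disjoint_bot_left⟩
  have hB : B ≠ ⊤ := by
    rintro rfl
    exact hA (eq_top_of_finrank_eq (le_antisymm (finrank_le A) (by simpa using h)))
  obtain ⟨v, hvA, hvB⟩ := exists_notMem_notMem_of_ne_top hA hB
  have hA' : A < span K {v} ⊔ A :=
    lt_of_le_of_ne le_sup_right fun hA' => hvA (hA' ▸ mem_sup_left (mem_span_singleton_self v))
  obtain ⟨S, hSA, hSB⟩ := ih _ hA' (span K {v} ⊔ B) (by
    rw [sup_comm, sup_comm _ A, finrank_sup_span_singleton hvA, finrank_sup_span_singleton hvB]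
    omega)
  exact ⟨S ⊔ span K {v},
    (disjoint_span_singleton_of_notMem hvA).symm.isCompl_sup_left_of_isCompl_sup_right hSA,
    (disjoint_span_singleton_of_notMem hvB).symm.disjoint_sup_left_of_disjoint_sup_right hSB⟩

/-- Double complement lemma: if `A`, `B` are subspaces of a finite-dimensional
vector space `C` with `dim A ≥ dim B`, then there is a subspace `S` with
`S ∩ A = {0}`, `S + A = C`, and `S ∩ B = {0}`. -/
theorem stmt_9 {K : Type*} [Field K] {C : Type*} [AddCommGroup C] [Module K C]
    [FiniteDimensional K C] (A B : Submodule K C)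
    (h : Module.finrank K A ≥ Module.finrank K B) :
    ∃ S : Submodule K C, S ⊓ A = ⊥ ∧ S ⊔ A = ⊤ ∧ S ⊓ B = ⊥ := by
  obtain ⟨S, hSA, hSB⟩ := exists_isCompl_disjoint_of_finrank_le A B h
  exact ⟨S, hSA.inf_eq_bot, hSA.sup_eq_top, hSB.eq_bot⟩
end

section
/- Let L be an n×m matrix over K. There exist matrices C₄, C₃, C₁ and an n×m matrix R such that (L, C₄, C₃, C₁, R) is a decomposition (3) of P if and only if the n×n matrix P₁ − L·P₃ is invertible. -/
/-!
Multiplying out, `P = [[1, 0], [L, 1]] · [[C₄, C₃], [0, C₁]] · [[1, 0], [R, 1]]` says exactly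
`C₃ = P₃`, `C₁ = P₁ - L P₃`, `C₄ = P₄ - P₃ R` and `(P₁ - L P₃) R = P₂ - L P₄`.
The outer factors are unitriangular, so `det P = det C₄ · det C₁` and invertibility of `P`
forces that of `C₁ = P₁ - L P₃`. Conversely, if `P₁ - L P₃` is invertible, the last equation
determines `R`, and the first three then define the `Cᵢ`.
-/

namespace Matrix

variable {m n α : Type*} [Fintype m] [Fintype n] [DecidableEq m] [DecidableEq n]

theorem fromBlocks_one_zero_mul_fromBlocks_zero_mul_fromBlocks_one_zero [Ring α]
    (L R : Matrix n m α) (C₄ : Matrix m m α) (C₃ : Matrix m n α) (C₁ : Matrix n n α) :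
    fromBlocks 1 0 L 1 * fromBlocks C₄ C₃ 0 C₁ * fromBlocks 1 0 R 1 =
      fromBlocks (C₄ + C₃ * R) C₃ (L * C₄ + (L * C₃ + C₁) * R) (L * C₃ + C₁) := by
  simp only [fromBlocks_multiply, Matrix.one_mul, Matrix.mul_one, Matrix.zero_mul,
    Matrix.mul_zero, add_zero, zero_add]

variable [CommRing α]

theorem isUnit_sub_mul_of_eq_fromBlocks_mul {P₄ : Matrix m m α} {P₃ : Matrix m n α}
    {P₂ : Matrix n m α} {P₁ : Matrix n n α} (hP : IsUnit (fromBlocks P₄ P₃ P₂ P₁))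
    {L R : Matrix n m α} {C₄ : Matrix m m α} {C₃ : Matrix m n α} {C₁ : Matrix n n α}
    (h : fromBlocks P₄ P₃ P₂ P₁ =
      fromBlocks 1 0 L 1 * fromBlocks C₄ C₃ 0 C₁ * fromBlocks 1 0 R 1) :
    IsUnit (P₁ - L * P₃) := by
  have hdet : (fromBlocks P₄ P₃ P₂ P₁).det = C₄.det * C₁.det := by
    simp [h, det_fromBlocks_zero₂₁]
  rw [fromBlocks_one_zero_mul_fromBlocks_zero_mul_fromBlocks_one_zero, fromBlocks_inj] at h
  obtain ⟨-, rfl, -, rfl⟩ := h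
  rw [isUnit_iff_isUnit_det] at hP ⊢
  rw [hdet] at hP
  simpa using isUnit_of_mul_isUnit_right hP

theorem exists_eq_fromBlocks_mul_of_isUnit_sub_mul (P₄ : Matrix m m α) (P₃ : Matrix m n α)
    (P₂ : Matrix n m α) {P₁ : Matrix n n α} {L : Matrix n m α} (hL : IsUnit (P₁ - L * P₃)) :
    ∃ (C₄ : Matrix m m α) (C₃ : Matrix m n α) (C₁ : Matrix n n α) (R : Matrix n m α),
      fromBlocks P₄ P₃ P₂ P₁ =
        fromBlocks 1 0 L 1 * fromBlocks C₄ C₃ 0 C₁ * fromBlocks 1 0 R 1 := by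
  set R := (P₁ - L * P₃)⁻¹ * (P₂ - L * P₄)
  have hR : (P₁ - L * P₃) * R = P₂ - L * P₄ :=
    mul_nonsing_inv_cancel_left _ _ ((isUnit_iff_isUnit_det _).mp hL)
  refine ⟨P₄ - P₃ * R, P₃, P₁ - L * P₃, R, ?_⟩
  rw [fromBlocks_one_zero_mul_fromBlocks_zero_mul_fromBlocks_one_zero, fromBlocks_inj]
  refine ⟨(sub_add_cancel _ _).symm, rfl, ?_, (add_sub_cancel _ _).symm⟩
  calc P₂ = L * P₄ + (P₁ - L * P₃) * R := by rw [hR, add_sub_cancel]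
    _ = L * (P₄ - P₃ * R) + P₁ * R := by
      rw [Matrix.sub_mul, Matrix.mul_sub, Matrix.mul_assoc]; abel
    _ = L * (P₄ - P₃ * R) + (L * P₃ + (P₁ - L * P₃)) * R := by rw [add_sub_cancel]

end Matrix

/-- Lemma (characterization of decompositions): a decomposition (3) of `P` with
left factor `L` exists if and only if `P₁ - L·P₃` is invertible. -/
theorem stmt_10 {K : Type*} [Field K] {m n : ℕ}
    (P₄ : Matrix (Fin m) (Fin m) K) (P₃ : Matrix (Fin m) (Fin n) K)
    (P₂ : Matrix (Fin n) (Fin m) K) (P₁ : Matrix (Fin n) (Fin n) K)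
    (hP : IsUnit (Matrix.fromBlocks P₄ P₃ P₂ P₁))
    (L : Matrix (Fin n) (Fin m) K) :
    (∃ (C₄ : Matrix (Fin m) (Fin m) K) (C₃ : Matrix (Fin m) (Fin n) K)
      (C₁ : Matrix (Fin n) (Fin n) K) (R : Matrix (Fin n) (Fin m) K),
      Matrix.fromBlocks P₄ P₃ P₂ P₁ =
        Matrix.fromBlocks 1 0 L 1 * Matrix.fromBlocks C₄ C₃ 0 C₁ *
          Matrix.fromBlocks 1 0 R 1) ↔ IsUnit (P₁ - L * P₃) := by
  exact ⟨fun ⟨_, _, _, _, h⟩ => Matrix.isUnit_sub_mul_of_eq_fromBlocks_mul hP h,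
    Matrix.exists_eq_fromBlocks_mul_of_isUnit_sub_mul P₄ P₃ P₂⟩
end

section
/- Let L be an n×m matrix over K such that rank L + r₁ = n and such that the subspaces im P₁ and (L·P₃)(ker P₁) of Kⁿ satisfy im P₁ ∩ (L·P₃)(ker P₁) = {0} and im P₁ + (L·P₃)(ker P₁) = Kⁿ. Then P₁ − L·P₃ is invertible. -/
/-!
Write `B = P₁` and `A = L·P₃` as endomorphisms of `Kⁿ` and `S = A(ker B)`. The direct sum
`im B ⊕ S = Kⁿ` and rank–nullity give `dim S = dim ker B`, so `A` is injective on `ker B`; and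
`rank A ≤ rank L = n - r₁ = dim ker B = dim S` forces `S = im A`. If `Bv = Av`, this common vector
lies in `im B ∩ im A = im B ∩ S = 0`, so `v ∈ ker B` and `Av = 0`, whence `v = 0`.
-/

open Module LinearMap

theorem Submodule.disjoint_ker_of_finrank_map_eq {K V W : Type*} [DivisionRing K]
    [AddCommGroup V] [Module K V] [AddCommGroup W] [Module K W] [FiniteDimensional K V]
    (f : V →ₗ[K] W) {p : Submodule K V} (h : finrank K (p.map f) = finrank K p) :
    Disjoint p (ker f) := by
  rw [← injective_domRestrict_iff, ← ker_eq_bot, ← Submodule.finrank_eq_zero]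
  have := (f.domRestrict p).finrank_range_add_finrank_ker
  rw [range_domRestrict] at this
  omega

theorem LinearMap.injective_sub_of_isCompl_range_map_ker {K V : Type*} [DivisionRing K]
    [AddCommGroup V] [Module K V] [FiniteDimensional K V] {B A : V →ₗ[K] V}
    (hcompl : IsCompl (range B) ((ker B).map A))
    (hA : finrank K (range A) ≤ finrank K (ker B)) :
    Function.Injective (B - A) := by
  have hdim : finrank K ((ker B).map A) = finrank K (ker B) := by
    have := Submodule.finrank_add_eq_of_isCompl hcompl
    have := B.finrank_range_add_finrank_ker
    omega
  have hrange : (ker B).map A = range A :=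
    Submodule.eq_of_le_of_finrank_le map_le_range (hA.trans hdim.ge)
  have hAinj := Submodule.disjoint_ker_of_finrank_map_eq A hdim
  rw [← ker_eq_bot, eq_bot_iff]
  intro v hv
  have hBA : B v = A v := sub_eq_zero.mp hv
  have hBv : B v = 0 := Submodule.disjoint_def.mp hcompl.disjoint _ (mem_range_self B v)
    (hrange ▸ hBA ▸ mem_range_self A v)
  exact Submodule.disjoint_def.mp hAinj v hBv (mem_ker.mpr (hBA ▸ hBv))

theorem Matrix.rank_add_finrank_ker_mulVecLin {K : Type*} [Field K] {m n : ℕ}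
    (M : Matrix (Fin m) (Fin n) K) : M.rank + finrank K (ker M.mulVecLin) = n := by
  conv_rhs => rw [← finrank_fin_fun K (n := n)]
  exact M.mulVecLin.finrank_range_add_finrank_ker

theorem stmt_12_general {K : Type*} [Field K] {m n : ℕ}
    (P₃ : Matrix (Fin m) (Fin n) K)
    (P₁ : Matrix (Fin n) (Fin n) K)
    (L : Matrix (Fin n) (Fin m) K)
    (hrk : L.rank + P₁.rank = n)
    (hinf : LinearMap.range P₁.mulVecLin ⊓
      (LinearMap.ker P₁.mulVecLin).map (L * P₃).mulVecLin = ⊥)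
    (hsup : LinearMap.range P₁.mulVecLin ⊔
      (LinearMap.ker P₁.mulVecLin).map (L * P₃).mulVecLin = ⊤) :
    IsUnit (P₁ - L * P₃) := by
  have hmulVec : (P₁ - L * P₃).mulVec = ⇑(P₁.mulVecLin - (L * P₃).mulVecLin) := by
    funext v
    simp [Matrix.sub_mulVec]
  have hrankA : (L * P₃).rank ≤ finrank K (ker P₁.mulVecLin) := by
    have := Matrix.rank_mul_le_left L P₃
    have := P₁.rank_add_finrank_ker_mulVecLin
    omega
  rw [← Matrix.mulVec_injective_iff_isUnit, hmulVec]
  exact injective_sub_of_isCompl_range_map_ker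
    ⟨disjoint_iff.mpr hinf, codisjoint_iff.mpr hsup⟩ hrankA

/-- Lemma: if `rank L = n - r₁` and `im P₁ ⊕ (L·P₃)(ker P₁) = Kⁿ`,
then `P₁ - L·P₃` is invertible. -/
theorem stmt_12 {K : Type*} [Field K] {m n : ℕ}
    (P₄ : Matrix (Fin m) (Fin m) K) (P₃ : Matrix (Fin m) (Fin n) K)
    (P₂ : Matrix (Fin n) (Fin m) K) (P₁ : Matrix (Fin n) (Fin n) K)
    (hP : IsUnit (Matrix.fromBlocks P₄ P₃ P₂ P₁))
    (L : Matrix (Fin n) (Fin m) K)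
    (hrk : L.rank + P₁.rank = n)
    (hinf : LinearMap.range P₁.mulVecLin ⊓
      (LinearMap.ker P₁.mulVecLin).map (L * P₃).mulVecLin = ⊥)
    (hsup : LinearMap.range P₁.mulVecLin ⊔
      (LinearMap.ker P₁.mulVecLin).map (L * P₃).mulVecLin = ⊤) :
    IsUnit (P₁ - L * P₃) :=
  stmt_12_general P₃ P₁ L hrk hinf hsup
end

section
/- Let T be a subspace of Kᵐ with T ∩ P₄(ker P₂) = {0} and T + P₄(ker P₂) = im P₄, and let V be a subspace of Kⁿ with V ∩ P₂(ker P₄) = {0} and V + P₂(ker P₄) = im P₂. Let F = P₄⁻¹(T) ∩ P₂⁻¹(V) (the intersection of the preimage subspaces). Then the restriction of the linear map x ↦ P₄x to F is a bijection from F onto T, the restriction of x ↦ P₂x to F is a bijection from F onto V, and consequently the map f : T → V defined by f(P₄v) = P₂v for all v ∈ F is a well-defined linear isomorphism. -/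
/-! Invertibility of the block matrix gives `ker P₄ ∩ ker P₂ = 0`. If `v ∈ F` and `P₄ v = 0`, then
`P₂ v ∈ V ∩ P₂(ker P₄) = 0`, so `v = 0`: `P₄` is injective on `F`. Any `t = P₄ u ∈ T` lifts to `F`:
write `P₂ u = v' + P₂ w` with `v' ∈ V`, `w ∈ ker P₄`; then `u - w ∈ F` and `P₄ (u - w) = t`.
Swapping the roles of `(P₄, T)` and `(P₂, V)` gives the bijection `F → V`, and `f` is the
composite of the inverse of the first isomorphism with the second. -/

namespace LinearMap

variable {R E M N : Type*} [Ring R] [AddCommGroup E] [AddCommGroup M] [AddCommGroup N]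
  [Module R E] [Module R M] [Module R N]
  {A : E →ₗ[R] M} {B : E →ₗ[R] N} {T : Submodule R M} {V : Submodule R N}

theorem injOn_comap_inf (hAB : ker A ⊓ ker B = ⊥) (hV : V ⊓ (ker A).map B = ⊥) :
    Set.InjOn A (T.comap A ⊓ V.comap B) := by
  have hzero : ∀ v ∈ T.comap A ⊓ V.comap B, A v = 0 → v = 0 := by
    intro v hv hAv
    have hBv : B v ∈ V ⊓ (ker A).map B := ⟨hv.2, Submodule.mem_map_of_mem hAv⟩
    rw [hV, Submodule.mem_bot] at hBv
    have hv' : v ∈ ker A ⊓ ker B := ⟨hAv, hBv⟩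
    rwa [hAB, Submodule.mem_bot] at hv'
  intro a ha b hb hab
  rw [← sub_eq_zero]
  exact hzero _ (sub_mem ha hb) (by rw [map_sub, hab, sub_self])

theorem surjOn_comap_inf (hT : T ≤ range A) (hV : range B ≤ V ⊔ (ker A).map B) :
    Set.SurjOn A (T.comap A ⊓ V.comap B) T := by
  intro t ht
  obtain ⟨u, rfl⟩ := hT ht
  obtain ⟨v, hv, _, ⟨w, hw, rfl⟩, hBu⟩ := Submodule.mem_sup.1 (hV (mem_range_self B u))
  have hAw : A w = 0 := hw
  have hAuw : A (u - w) = A u := by rw [map_sub, hAw, sub_zero]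
  have hBuw : B (u - w) = v := by rw [map_sub, ← hBu, add_sub_cancel_right]
  exact ⟨u - w, ⟨show A (u - w) ∈ T from hAuw ▸ ht, show B (u - w) ∈ V from hBuw ▸ hv⟩, hAuw⟩

theorem bijOn_comap_inf (hAB : ker A ⊓ ker B = ⊥) (hV₁ : V ⊓ (ker A).map B = ⊥)
    (hT : T ≤ range A) (hV₂ : range B ≤ V ⊔ (ker A).map B) :
    Set.BijOn A (T.comap A ⊓ V.comap B) T :=
  ⟨fun _ hv => hv.1, injOn_comap_inf hAB hV₁, surjOn_comap_inf hT hV₂⟩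

theorem exists_linearEquiv_of_bijOn {F : Submodule R E} (hA : Set.BijOn A F T)
    (hB : Set.BijOn B F V) :
    ∃ f : T ≃ₗ[R] V, ∀ v ∈ F, ∀ hv : A v ∈ T, (f ⟨A v, hv⟩ : N) = B v := by
  let eA := LinearEquiv.ofBijective (A.restrict hA.mapsTo) hA.bijective
  let eB := LinearEquiv.ofBijective (B.restrict hB.mapsTo) hB.bijective
  refine ⟨eA.symm.trans eB, fun v hvF hv => ?_⟩
  have hAv : eA.symm ⟨A v, hv⟩ = ⟨v, hvF⟩ := eA.symm_apply_eq.2 rfl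
  simp only [LinearEquiv.trans_apply, hAv]
  rfl

end LinearMap

namespace Matrix

theorem ker_mulVecLin_inf_eq_bot_of_isUnit_fromBlocks {R l m : Type*} [CommRing R]
    [Fintype l] [Fintype m] [DecidableEq l] [DecidableEq m] {A : Matrix l l R}
    {B : Matrix l m R} {C : Matrix m l R} {D : Matrix m m R} (h : IsUnit (fromBlocks A B C D)) :
    LinearMap.ker A.mulVecLin ⊓ LinearMap.ker C.mulVecLin = ⊥ := by
  refine (Submodule.eq_bot_iff _).2 fun x hx => ?_
  have hAx : A *ᵥ x = 0 := hx.1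
  have hCx : C *ᵥ x = 0 := hx.2
  have hblock : fromBlocks A B C D *ᵥ Sum.elim x 0 = fromBlocks A B C D *ᵥ 0 := by
    rw [fromBlocks_mulVec, mulVec_zero]
    simp [hAx, hCx]
  funext i
  exact congrFun (mulVec_injective_of_isUnit h hblock) (Sum.inl i)

end Matrix

/-- Lemma (building the bijection): let `T` be a complement of `P₄(ker P₂)` in
`im P₄`, `V` a complement of `P₂(ker P₄)` in `im P₂`, and
`F = P₄⁻¹(T) ∩ P₂⁻¹(V)`. Then `x ↦ P₄x` restricted to `F` is a bijection onto
`T`, `x ↦ P₂x` restricted to `F` is a bijection onto `V`, and the map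
`f : T → V` defined by `f(P₄v) = P₂v` for `v ∈ F` is a well-defined linear
isomorphism. -/
theorem stmt_15 {K : Type*} [Field K] {m n : ℕ}
    (P₄ : Matrix (Fin m) (Fin m) K) (P₃ : Matrix (Fin m) (Fin n) K)
    (P₂ : Matrix (Fin n) (Fin m) K) (P₁ : Matrix (Fin n) (Fin n) K)
    (hP : IsUnit (Matrix.fromBlocks P₄ P₃ P₂ P₁))
    (T : Submodule K (Fin m → K))
    (hT₁ : T ⊓ (LinearMap.ker P₂.mulVecLin).map P₄.mulVecLin = ⊥)
    (hT₂ : T ⊔ (LinearMap.ker P₂.mulVecLin).map P₄.mulVecLin =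
      LinearMap.range P₄.mulVecLin)
    (V : Submodule K (Fin n → K))
    (hV₁ : V ⊓ (LinearMap.ker P₄.mulVecLin).map P₂.mulVecLin = ⊥)
    (hV₂ : V ⊔ (LinearMap.ker P₄.mulVecLin).map P₂.mulVecLin =
      LinearMap.range P₂.mulVecLin)
    (F : Submodule K (Fin m → K))
    (hF : F = T.comap P₄.mulVecLin ⊓ V.comap P₂.mulVecLin) :
    Set.BijOn P₄.mulVec (F : Set (Fin m → K)) (T : Set (Fin m → K)) ∧
    Set.BijOn P₂.mulVec (F : Set (Fin m → K)) (V : Set (Fin n → K)) ∧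
    ∃ f : T ≃ₗ[K] V, ∀ v ∈ F, ∀ hv : P₄.mulVec v ∈ T,
      (f ⟨P₄.mulVec v, hv⟩ : Fin n → K) = P₂.mulVec v := by
  have hker := Matrix.ker_mulVecLin_inf_eq_bot_of_isUnit_fromBlocks hP
  have hP₄ : Set.BijOn P₄.mulVecLin F T := by
    rw [hF]
    exact LinearMap.bijOn_comap_inf hker hV₁ (hT₂ ▸ le_sup_left) hV₂.ge
  have hP₂ : Set.BijOn P₂.mulVecLin F V := by
    rw [hF, inf_comm]
    exact LinearMap.bijOn_comap_inf ((inf_comm _ _).trans hker) hT₁ (hV₂ ▸ le_sup_left) hT₂.ge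
  exact ⟨hP₄, hP₂, LinearMap.exists_linearEquiv_of_bijOn hP₄ hP₂⟩
end

section
/- Let L be an n×m matrix over K such that P₁ − L·P₃ is invertible, and set C = P₄ − P₃(P₁ − LP₃)⁻¹(P₂ − LP₄). Let z ∈ Kᵐ with z ∉ ker(P₂ − LP₄) + ker P₄, and let L′ be an n×m matrix over K satisfying: rank L′ = 1; L′(P₄x) = 0 for all x ∈ ker(P₂ − LP₄); L′(P₄z) = (P₂ − LP₄)z; and L′(Cz) ≠ 0. Then P₁ − (L + L′)·P₃ is invertible and rank(P₂ − (L + L′)·P₄) + 1 = rank(P₂ − L·P₄). -/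
/-!
Write `A = P₂ - L P₄`, `B = P₁ - L P₃` and `u = A z`, which is nonzero because `z ∉ ker A`.
Since `L'` has rank one and `L' (P₄ z) = u`, the range of `L'` is the line `K u`. Hence
`B - L' P₃` is a perturbation of the invertible `B` with range in `K u`, and it can only fail to
be invertible when `L' P₃ B⁻¹ u = u`, i.e. when `L' C z = u - L' P₃ B⁻¹ u` vanishes. In the same
way `ker (A - L' P₄) = ker A ⊔ K z`, one dimension more than `ker A`, and rank–nullity gives the
drop of the rank by one.
-/

open Module LinearMap Matrix

theorem LinearMap.range_le_span_singleton_of_finrank_range_eq_one {K V W : Type*} [Field K]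
    [AddCommGroup V] [Module K V] [AddCommGroup W] [Module K W] {f : V →ₗ[K] W}
    (hf : finrank K (range f) = 1) {u : W} (hu : u ∈ range f) (hu0 : u ≠ 0) :
    range f ≤ K ∙ u := by
  intro w hw
  obtain ⟨c, hc⟩ := (finrank_eq_one_iff_of_nonzero' (⟨u, hu⟩ : range f)
    (Subtype.coe_ne_coe.mp hu0)).mp hf ⟨w, hw⟩
  exact Submodule.mem_span_singleton.mpr ⟨c, congrArg Subtype.val hc⟩

theorem LinearMap.ker_sub_eq_sup_span_singleton {R V W : Type*} [Ring R]
    [AddCommGroup V] [Module R V] [AddCommGroup W] [Module R W] {f g : V →ₗ[R] W} {z : V}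
    (hker : ker f ≤ ker g) (hz : g z = f z) (hrange : range g ≤ R ∙ f z) :
    ker (f - g) = ker f ⊔ R ∙ z := by
  apply le_antisymm
  · intro x hx
    obtain ⟨c, hc⟩ := Submodule.mem_span_singleton.mp (hrange (mem_range_self g x))
    have hfx : f x = g x := sub_eq_zero.mp hx
    have hxz : x - c • z ∈ ker f := by
      rw [mem_ker, map_sub, map_smul, hc, hfx, sub_self]
    have hcz : c • z ∈ R ∙ z := Submodule.smul_mem _ c (Submodule.mem_span_singleton_self z)
    simpa using Submodule.add_mem_sup hxz hcz
  · refine sup_le (fun x hx => ?_) ((Submodule.span_singleton_le_iff_mem _ _).mpr ?_)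
    · rw [mem_ker, sub_apply, mem_ker.mp hx, mem_ker.mp (hker hx), sub_zero]
    · rw [mem_ker, sub_apply, hz, sub_self]

theorem LinearMap.finrank_range_add_one_of_ker_eq_sup_span_singleton {K V W : Type*} [Field K]
    [AddCommGroup V] [Module K V] [FiniteDimensional K V] [AddCommGroup W] [Module K W]
    {f g : V →ₗ[K] W} {z : V} (hker : ker g = ker f ⊔ K ∙ z) (hz : z ∉ ker f) :
    finrank K (range g) + 1 = finrank K (range f) := by
  have hg := finrank_range_add_finrank_ker g
  have hf := finrank_range_add_finrank_ker f
  rw [hker, Submodule.finrank_sup_span_singleton hz] at hg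
  omega

theorem Matrix.mulVecLin_sub {R ι κ : Type*} [CommRing R] [Fintype κ] (M N : Matrix ι κ R) :
    (M - N).mulVecLin = M.mulVecLin - N.mulVecLin :=
  LinearMap.ext (sub_mulVec M N)

theorem Matrix.isUnit_sub_of_mulVec_mem_span_singleton {K ι : Type*} [Field K] [Fintype ι]
    [DecidableEq ι] {B Q : Matrix ι ι K} (hB : IsUnit B) {u : ι → K}
    (hQ : ∀ x, Q *ᵥ x ∈ K ∙ u) (hu : Q *ᵥ (B⁻¹ *ᵥ u) ≠ u) : IsUnit (B - Q) := by
  rw [← mulVec_injective_iff_isUnit]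
  refine (injective_iff_map_eq_zero (B - Q).mulVecLin).mpr fun x hx => ?_
  obtain ⟨c, hc⟩ := Submodule.mem_span_singleton.mp (hQ x)
  have hBx : B *ᵥ x = c • u := by
    rw [hc]; exact sub_eq_zero.mp ((sub_mulVec B Q x).symm.trans hx)
  have hx_eq : x = c • (B⁻¹ *ᵥ u) := by
    rw [← mulVec_smul, ← hBx, mulVec_mulVec,
      nonsing_inv_mul B ((isUnit_iff_isUnit_det B).mp hB), one_mulVec]
  obtain rfl | hc0 := eq_or_ne c 0
  · simpa using hx_eq
  · refine absurd (smul_right_injective _ hc0 ?_) hu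
    change c • (Q *ᵥ (B⁻¹ *ᵥ u)) = c • u
    rw [← mulVec_smul, ← hx_eq, hc]

theorem stmt_17_general {K : Type*} [Field K] {m n : ℕ}
    (P₄ : Matrix (Fin m) (Fin m) K) (P₃ : Matrix (Fin m) (Fin n) K)
    (P₂ : Matrix (Fin n) (Fin m) K) (P₁ : Matrix (Fin n) (Fin n) K)
    (L : Matrix (Fin n) (Fin m) K) (hL : IsUnit (P₁ - L * P₃))
    (C : Matrix (Fin m) (Fin m) K)
    (hC : C = P₄ - P₃ * (P₁ - L * P₃)⁻¹ * (P₂ - L * P₄))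
    (z : Fin m → K)
    (hz : z ∉ LinearMap.ker (P₂ - L * P₄).mulVecLin ⊔
      LinearMap.ker P₄.mulVecLin)
    (L' : Matrix (Fin n) (Fin m) K)
    (hL'₁ : L'.rank = 1)
    (hL'₂ : ∀ x ∈ LinearMap.ker (P₂ - L * P₄).mulVecLin,
      L'.mulVec (P₄.mulVec x) = 0)
    (hL'₃ : L'.mulVec (P₄.mulVec z) = (P₂ - L * P₄).mulVec z)
    (hL'₄ : L'.mulVec (C.mulVec z) ≠ 0) :
    IsUnit (P₁ - (L + L') * P₃) ∧
    (P₂ - (L + L') * P₄).rank + 1 = (P₂ - L * P₄).rank := by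
  set A := P₂ - L * P₄
  have hzA : z ∉ ker A.mulVecLin := fun h => hz (Submodule.mem_sup_left h)
  have hrange : range L'.mulVecLin ≤ K ∙ (A *ᵥ z) :=
    range_le_span_singleton_of_finrank_range_eq_one hL'₁ ⟨P₄ *ᵥ z, hL'₃⟩ hzA
  have hmem {k : ℕ} (M : Matrix (Fin m) (Fin k) K) (x : Fin k → K) :
      (L' * M) *ᵥ x ∈ K ∙ (A *ᵥ z) :=
    hrange ⟨M *ᵥ x, mulVec_mulVec x L' M⟩
  rw [Matrix.add_mul, ← sub_sub, Matrix.add_mul, ← sub_sub]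
  refine ⟨isUnit_sub_of_mulVec_mem_span_singleton hL (hmem P₃) fun h => hL'₄ ?_, ?_⟩
  · rw [hC, sub_mulVec, mulVec_sub, hL'₃, ← h]
    simp only [mulVec_mulVec, Matrix.mul_assoc, sub_self]
  · refine finrank_range_add_one_of_ker_eq_sup_span_singleton ?_ hzA
    rw [mulVecLin_sub]
    refine ker_sub_eq_sup_span_singleton (fun x hx => ?_) ?_ ?_
    · exact (mulVec_mulVec x L' P₄).symm.trans (hL'₂ x hx)
    · exact (mulVec_mulVec z L' P₄).symm.trans hL'₃
    · rintro _ ⟨x, rfl⟩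
      exact hmem P₄ x

/-- Rank exchange lemma: given `L` with `P₁ - L·P₃` invertible,
`C = P₄ - P₃(P₁ - LP₃)⁻¹(P₂ - LP₄)`, a vector `z ∉ ker(P₂ - LP₄) + ker P₄`,
and a rank-one matrix `L′` with `L′(P₄ ker(P₂ - LP₄)) = {0}`,
`L′P₄z = (P₂ - LP₄)z`, `L′Cz ≠ 0`, then `P₁ - (L + L′)·P₃` is invertible and
`rank (P₂ - (L + L′)P₄) = rank (P₂ - LP₄) - 1`. -/
theorem stmt_17 {K : Type*} [Field K] {m n : ℕ}
    (P₄ : Matrix (Fin m) (Fin m) K) (P₃ : Matrix (Fin m) (Fin n) K)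
    (P₂ : Matrix (Fin n) (Fin m) K) (P₁ : Matrix (Fin n) (Fin n) K)
    (hP : IsUnit (Matrix.fromBlocks P₄ P₃ P₂ P₁))
    (L : Matrix (Fin n) (Fin m) K) (hL : IsUnit (P₁ - L * P₃))
    (C : Matrix (Fin m) (Fin m) K)
    (hC : C = P₄ - P₃ * (P₁ - L * P₃)⁻¹ * (P₂ - L * P₄))
    (z : Fin m → K)
    (hz : z ∉ LinearMap.ker (P₂ - L * P₄).mulVecLin ⊔
      LinearMap.ker P₄.mulVecLin)
    (L' : Matrix (Fin n) (Fin m) K)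
    (hL'₁ : L'.rank = 1)
    (hL'₂ : ∀ x ∈ LinearMap.ker (P₂ - L * P₄).mulVecLin,
      L'.mulVec (P₄.mulVec x) = 0)
    (hL'₃ : L'.mulVec (P₄.mulVec z) = (P₂ - L * P₄).mulVec z)
    (hL'₄ : L'.mulVec (C.mulVec z) ≠ 0) :
    IsUnit (P₁ - (L + L') * P₃) ∧
    (P₂ - (L + L') * P₄).rank + 1 = (P₂ - L * P₄).rank :=
  stmt_17_general P₄ P₃ P₂ P₁ L hL C hC z hz L' hL'₁ hL'₂ hL'₃ hL'₄
end

section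
/- Let Q₂ and Q₃ be invertible n×n matrices over K and let P = [[0, Q₃], [Q₂, 0]] be the 2n×2n blocked matrix with zero diagonal blocks. Then P is invertible, and for every invertible n×n matrix L over K one has P = [[Iₙ, 0], [L, Iₙ]] · [[L⁻¹Q₂, Q₃], [0, −L·Q₃]] · [[Iₙ, 0], [−(L·Q₃)⁻¹Q₂, Iₙ]]; in this decomposition both off-diagonal factors L and −(L·Q₃)⁻¹Q₂ have rank n. Moreover, every decomposition (3) of P (with m = n) satisfies rank L = n and rank R = n. -/
/-!
Multiplying out, a decomposition (3) of `[[0, B], [C, 0]]` forces `C = -(L B R)`, so `L` and `R`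
are invertible whenever `C` is. Conversely the displayed factorization is checked by block
multiplication, and for `L = 1` it exhibits `P` as a product of block-triangular units.
-/

open Matrix

section

variable {α : Type*} {n : Type*} [Fintype n] [DecidableEq n]

theorem fromBlocks_one_zero_mul_mul_fromBlocks_one_zero [Semiring α]
    (L A B C D R : Matrix n n α) :
    fromBlocks 1 0 L 1 * fromBlocks A B C D * fromBlocks 1 0 R 1 =
      fromBlocks (A + B * R) B (L * A + C + (L * B + D) * R) (L * B + D) := by
  simp only [fromBlocks_multiply, Matrix.one_mul, Matrix.mul_one, Matrix.zero_mul,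
    Matrix.mul_zero, add_zero, zero_add]

variable [CommRing α]

theorem fromBlocks_one_zero_mul_mul_fromBlocks_one_zero_eq_antidiag
    {L Q₃ : Matrix n n α} (hL : IsUnit L) (hQ₃ : IsUnit Q₃) (Q₂ : Matrix n n α) :
    fromBlocks 1 0 L 1 * fromBlocks (L⁻¹ * Q₂) Q₃ 0 (-(L * Q₃)) *
        fromBlocks 1 0 (-((L * Q₃)⁻¹ * Q₂)) 1 = fromBlocks 0 Q₃ Q₂ 0 := by
  have hL' := (isUnit_iff_isUnit_det L).mp hL
  have hQ₃' := (isUnit_iff_isUnit_det Q₃).mp hQ₃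
  rw [fromBlocks_one_zero_mul_mul_fromBlocks_one_zero, Matrix.mul_inv_rev, Matrix.mul_neg,
    ← Matrix.mul_assoc Q₃, ← Matrix.mul_assoc Q₃, mul_nonsing_inv Q₃ hQ₃', Matrix.one_mul,
    mul_nonsing_inv_cancel_left L Q₂ hL']
  simp

theorem neg_mul_mul_eq_of_fromBlocks_antidiag_eq {L R B C C₄ C₃ C₁ : Matrix n n α}
    (h : fromBlocks 0 B C 0 = fromBlocks 1 0 L 1 * fromBlocks C₄ C₃ 0 C₁ * fromBlocks 1 0 R 1) :
    -(L * B * R) = C := by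
  rw [fromBlocks_one_zero_mul_mul_fromBlocks_one_zero, fromBlocks_inj] at h
  obtain ⟨h₁₁, rfl, h₂₁, h₂₂⟩ := h
  rw [h₂₁, ← h₂₂, eq_neg_of_add_eq_zero_left h₁₁.symm]
  simp [Matrix.mul_assoc]

end

theorem rank_eq_of_isUnit {K : Type*} [CommRing K] [StrongRankCondition K] {n : ℕ}
    {A : Matrix (Fin n) (Fin n) K} (hA : IsUnit A) : A.rank = n := by
  rw [rank_of_isUnit A hA, Fintype.card_fin]

/-- Example: for invertible `Q₂`, `Q₃`, the matrix `P = [[0, Q₃], [Q₂, 0]]` is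
invertible; for every invertible `L` the displayed three-factor product is a
decomposition (3) of `P` whose off-diagonal factors `L` and `-(LQ₃)⁻¹Q₂` have
rank `n`; and every decomposition (3) of `P` has `rank L = n` and
`rank R = n`. -/
theorem stmt_19 {K : Type*} [Field K] {n : ℕ}
    (Q₂ Q₃ : Matrix (Fin n) (Fin n) K) (hQ₂ : IsUnit Q₂) (hQ₃ : IsUnit Q₃) :
    IsUnit (Matrix.fromBlocks (0 : Matrix (Fin n) (Fin n) K) Q₃ Q₂ 0) ∧
    (∀ L : Matrix (Fin n) (Fin n) K, IsUnit L →
      Matrix.fromBlocks (0 : Matrix (Fin n) (Fin n) K) Q₃ Q₂ 0 =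
        Matrix.fromBlocks 1 0 L 1 *
          Matrix.fromBlocks (L⁻¹ * Q₂) Q₃ 0 (-(L * Q₃)) *
          Matrix.fromBlocks 1 0 (-((L * Q₃)⁻¹ * Q₂)) 1 ∧
      L.rank = n ∧ (-((L * Q₃)⁻¹ * Q₂)).rank = n) ∧
    (∀ L R C₄ C₃ C₁ : Matrix (Fin n) (Fin n) K,
      Matrix.fromBlocks (0 : Matrix (Fin n) (Fin n) K) Q₃ Q₂ 0 =
        Matrix.fromBlocks 1 0 L 1 * Matrix.fromBlocks C₄ C₃ 0 C₁ *
          Matrix.fromBlocks 1 0 R 1 →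
      L.rank = n ∧ R.rank = n) := by
  have decomp (L : Matrix (Fin n) (Fin n) K) (hL : IsUnit L) :=
    (fromBlocks_one_zero_mul_mul_fromBlocks_one_zero_eq_antidiag hL hQ₃ Q₂).symm
  refine ⟨?_, fun L hL => ⟨decomp L hL, rank_eq_of_isUnit hL, ?_⟩, fun L R C₄ C₃ C₁ h => ?_⟩
  · rw [decomp 1 isUnit_one]
    simp [hQ₂, hQ₃]
  · exact rank_eq_of_isUnit ((isUnit_nonsing_inv_iff.mpr (hL.mul hQ₃)).mul hQ₂).neg
  · have hLQ₃R : IsUnit (L * Q₃ * R) := by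
      rw [← IsUnit.neg_iff, neg_mul_mul_eq_of_fromBlocks_antidiag_eq h]
      exact hQ₂
    exact ⟨rank_eq_of_isUnit (isUnit_of_mul_isUnit_left (isUnit_of_mul_isUnit_left hLQ₃R)),
      rank_eq_of_isUnit (isUnit_of_mul_isUnit_right hLQ₃R)⟩
end
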